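/- arXiv:2401.13057 — 7 statements merged into one kernel-verified Lean document; each statement's English description precedes it below -/
import Mathlib

section
/- Let C be a convex cone in a real Banach space X with dual X*. For every x ∈ X, the distance from x to C equals the supremum of y(x) over all y in the polar cone C° = {y ∈ X* : y(c) ≤ 0 for all c ∈ C} with ‖y‖ ≤ 1. -/
open Filter Topology Metric Set

/-- For a convex cone `C` in a real Banach space `X`, the distance from `x` to `C`
equals the supremum of `y x` over all `y` in the polar cone with `‖y‖ ≤ 1`. -/
theorem distance_to_convex_cone_eq_sup_polar
    {X : Type*} [NormedAddCommGroup X] [NormedSpace ℝ X] [CompleteSpace X]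
    (C : Set X) (hconv : Convex ℝ C)
    (hcone : ∀ c ∈ C, ∀ r : ℝ, 0 ≤ r → r • c ∈ C) (h0 : (0 : X) ∈ C)
    (x : X) :
    Metric.infDist x C =
      sSup {r : ℝ | ∃ y : X →L[ℝ] ℝ, (∀ c ∈ C, y c ≤ 0) ∧ ‖y‖ ≤ 1 ∧ r = y x} := by
  set S : Set ℝ := {r : ℝ | ∃ y : X →L[ℝ] ℝ, (∀ c ∈ C, y c ≤ 0) ∧ ‖y‖ ≤ 1 ∧ r = y x} with hS
  have hCne : C.Nonempty := ⟨0, h0⟩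
  have h0S : (0 : ℝ) ∈ S := ⟨0, by simp, by simp, by simp⟩
  have hSne : S.Nonempty := ⟨0, h0S⟩
  -- every element of S is ≤ infDist
  have hub : ∀ r ∈ S, r ≤ Metric.infDist x C := by
    rintro r ⟨y, hyC, hy1, rfl⟩
    by_contra hcon
    push_neg at hcon
    obtain ⟨c, hc, hlt⟩ := (infDist_lt_iff hCne).mp hcon
    have hfin : y x ≤ dist x c := by
      have : y x - y c ≤ ‖y‖ * ‖x - c‖ := by
        calc y x - y c = y (x - c) := by rw [map_sub]
          _ ≤ ‖y (x - c)‖ := le_abs_self _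
          _ ≤ ‖y‖ * ‖x - c‖ := y.le_opNorm _
      have h2 : y x ≤ y c + ‖y‖ * ‖x - c‖ := by linarith
      have := hyC c hc
      have h3 : ‖y‖ * ‖x - c‖ ≤ 1 * ‖x - c‖ :=
        mul_le_mul_of_nonneg_right hy1 (norm_nonneg _)
      calc y x ≤ ‖y‖ * ‖x - c‖ := by linarith
        _ ≤ ‖x - c‖ := by linarith
        _ = dist x c := (dist_eq_norm x c).symm
    linarith
  have hbdd : BddAbove S := ⟨Metric.infDist x C, hub⟩
  refine le_antisymm ?_ (csSup_le hSne hub)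
  -- infDist ≤ sSup S
  refine le_of_forall_pos_le_add fun ε hε => ?_
  set d := Metric.infDist x C with hd
  by_cases hdε : d - ε ≤ 0
  · have : (0:ℝ) ≤ sSup S := le_csSup hbdd h0S
    linarith
  push_neg at hdε
  -- ball x (d - ε) is disjoint from C
  have hdisj : Disjoint (Metric.ball x (d - ε)) C := by
    rw [Set.disjoint_left]
    intro z hz hzC
    have h1 : d ≤ dist x z := Metric.infDist_le_dist_of_mem hzC
    rw [Metric.mem_ball, dist_comm] at hz
    linarith
  obtain ⟨f, u, hfu, huf⟩ :=
    geometric_hahn_banach_open (convex_ball x (d - ε)) Metric.isOpen_ball hconv hdisj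
  have hxball : x ∈ Metric.ball x (d - ε) := Metric.mem_ball_self (by linarith)
  have hu0 : u ≤ 0 := by simpa using huf 0 h0
  have hfx : f x < 0 := lt_of_lt_of_le (hfu x hxball) hu0
  -- f is nonnegative on C
  have hfC : ∀ c ∈ C, 0 ≤ f c := by
    intro c hc
    by_contra h
    push_neg at h
    have hu1 : u ≤ f c := huf c hc
    have hr : (0:ℝ) ≤ (u - 1) / f c := by
      rw [div_nonneg_iff]
      exact Or.inr ⟨by linarith, h.le⟩
    have := huf _ (hcone c hc _ hr)
    rw [map_smul] at this
    simp only [smul_eq_mul] at this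
    rw [div_mul_cancel₀ _ (ne_of_lt h)] at this
    linarith
  have hfne : ‖f‖ ≠ 0 := by
    intro h
    have := f.le_opNorm x
    rw [h] at this
    simp only [zero_mul] at this
    rw [Real.norm_eq_abs] at this
    have h2 : -f x ≤ |f x| := neg_le_abs _
    linarith
  have hfpos : 0 < ‖f‖ := lt_of_le_of_ne (norm_nonneg f) (Ne.symm hfne)
  -- key: ‖f‖ * (d - ε) ≤ -f x
  have hkey : ‖f‖ * (d - ε) ≤ -f x := by
    by_contra h
    push_neg at h
    have hlt : (-f x) / (d - ε) < ‖f‖ := by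
      rw [div_lt_iff₀ (by linarith : (0:ℝ) < d - ε)]
      linarith
    obtain ⟨z, hz1, hz2⟩ := f.exists_lt_apply_of_lt_opNorm hlt
    -- scale z by (d - ε)
    set w := (d - ε) • z with hw
    have hwnorm : ‖w‖ < d - ε := by
      rw [hw, norm_smul, Real.norm_eq_abs, abs_of_pos (by linarith : (0:ℝ) < d - ε)]
      nlinarith
    have hfw : -f x < |f w| := by
      rw [hw, map_smul, smul_eq_mul, abs_mul, abs_of_pos (by linarith : (0:ℝ) < d - ε)]
      rw [div_lt_iff₀ (by linarith : (0:ℝ) < d - ε)] at hz2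
      calc -f x < ‖f z‖ * (d - ε) := hz2
        _ = (d - ε) * |f z| := by rw [Real.norm_eq_abs]; ring
    -- pick w or -w to get f v > -f x with ‖v‖ < d - ε
    rcases abs_cases (f w) with ⟨he, _⟩ | ⟨he, _⟩
    · have hmem : x + w ∈ Metric.ball x (d - ε) := by
        rw [Metric.mem_ball, dist_eq_norm]
        simpa using hwnorm
      have := hfu _ hmem
      rw [map_add] at this
      rw [he] at hfw
      linarith
    · have hmem : x + (-w) ∈ Metric.ball x (d - ε) := by
        rw [Metric.mem_ball, dist_eq_norm]
        simpa using hwnorm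
      have := hfu _ hmem
      rw [map_add, map_neg] at this
      rw [he] at hfw
      linarith
  -- normalize
  set y : X →L[ℝ] ℝ := ‖f‖⁻¹ • (-f) with hy
  have hynorm : ‖y‖ ≤ 1 := by
    have : ‖y‖ = ‖f‖⁻¹ * ‖f‖ := by
      rw [hy, norm_smul (β := X →L[ℝ] ℝ), norm_neg, norm_inv, Real.norm_eq_abs, abs_of_pos hfpos]
    rw [this, inv_mul_cancel₀ hfne]
  have hyC : ∀ c ∈ C, y c ≤ 0 := by
    intro c hc
    have := hfC c hc
    simp only [hy, ContinuousLinearMap.coe_smul', Pi.smul_apply, ContinuousLinearMap.neg_apply,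
      smul_eq_mul]
    have : -f c ≤ 0 := by linarith
    have hinv : 0 ≤ ‖f‖⁻¹ := inv_nonneg.mpr (norm_nonneg f)
    exact mul_nonpos_of_nonneg_of_nonpos hinv this
  have hyx : d - ε ≤ y x := by
    simp only [hy, ContinuousLinearMap.coe_smul', Pi.smul_apply, ContinuousLinearMap.neg_apply,
      smul_eq_mul]
    rw [← inv_mul_cancel_left₀ hfne (d - ε)]
    apply mul_le_mul_of_nonneg_left _ (inv_nonneg.mpr (norm_nonneg f))
    linarith
  have hmemS : y x ∈ S := ⟨y, hyC, hynorm, rfl⟩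
  have := le_csSup hbdd hmemS
  linarith
end

section
/- Let W × Z be compact in a product topology and let ρ be a pseudometric on W × Z that is continuous with respect to the product topology (i.e., if a net x_α → x in the product topology then ρ(x_α, x) → 0). Then W is totally bounded with respect to the pseudometric ρ_W(w, w') = sup_{z ∈ Z} ρ((w,z), (w',z)), and ρ_W is continuous with respect to the topology on W. -/
open Filter Topology Metric Set

/-- If `W × Z` is compact and `ρ` is a pseudometric on `W × Z` continuous with
respect to the product topology, then `W` is totally bounded with respect to
`ρ_W (w, w') = sup_z ρ((w,z),(w',z))`, and `ρ_W` is continuous on `W`. -/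
theorem totally_bounded_sup_pseudometric
    {W Z : Type*} [TopologicalSpace W] [TopologicalSpace Z] [CompactSpace (W × Z)]
    (ρ : (W × Z) → (W × Z) → ℝ)
    (hnonneg : ∀ a b, 0 ≤ ρ a b)
    (hrefl : ∀ a, ρ a a = 0)
    (hsymm : ∀ a b, ρ a b = ρ b a)
    (htri : ∀ a b c, ρ a c ≤ ρ a b + ρ b c)
    (hcont : ∀ a : W × Z, Tendsto (fun b => ρ b a) (𝓝 a) (𝓝 0)) :
    (∀ ε : ℝ, 0 < ε → ∃ F : Finset W, ∀ w : W, ∃ w₀ ∈ F,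
        (⨆ z : Z, ρ (w, z) (w₀, z)) < ε) ∧
      ∀ w : W, Tendsto (fun w' => ⨆ z : Z, ρ (w', z) (w, z)) (𝓝 w) (𝓝 0) := by
  classical
  rcases isEmpty_or_nonempty W with hW | hW
  · refine ⟨fun ε hε => ⟨∅, fun w => isEmptyElim w⟩, fun w => isEmptyElim w⟩
  rcases isEmpty_or_nonempty Z with hZ | hZ
  · constructor
    · intro ε hε
      refine ⟨{Classical.arbitrary W}, fun w => ⟨_, Finset.mem_singleton_self _, ?_⟩⟩
      rw [Real.iSup_of_isEmpty]; exact hε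
    · intro w
      simp only [Real.iSup_of_isEmpty]
      exact tendsto_const_nhds
  -- main case: `W` and `Z` nonempty
  -- joint continuity of `ρ`
  have hρc : Continuous fun p : (W × Z) × (W × Z) => ρ p.1 p.2 := by
    rw [continuous_iff_continuousAt]
    rintro ⟨a, x⟩
    have h0 : Tendsto (fun p : (W × Z) × (W × Z) => ρ p.1 a + ρ p.2 x)
        (𝓝 (a, x)) (𝓝 0) := by
      have h1 := (hcont a).comp (continuous_fst.tendsto (a, x))
      have h2 := (hcont x).comp (continuous_snd.tendsto (a, x))
      simpa using h1.add h2
    have hb : ∀ p : (W × Z) × (W × Z), |ρ p.1 p.2 - ρ a x| ≤ ρ p.1 a + ρ p.2 x := by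
      rintro ⟨b, c⟩
      rw [abs_sub_le_iff]
      have t1 := htri b a c
      have t2 := htri a x c
      have t3 := htri a b x
      have t4 := htri b c x
      have s1 := hsymm x c
      have s2 := hsymm a b
      constructor <;> simp only [] <;> linarith
    have hsq := squeeze_zero_norm (f := fun p : (W × Z) × (W × Z) => ρ p.1 p.2 - ρ a x)
      (fun p => by rw [Real.norm_eq_abs]; exact hb p) h0
    have : Tendsto (fun p : (W × Z) × (W × Z) => ρ p.1 p.2) (𝓝 (a, x)) (𝓝 (ρ a x)) := by
      have := hsq.add_const (ρ a x)
      simpa using this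
    exact this
  have hWc : CompactSpace W := by
    constructor
    have h := isCompact_univ.image (continuous_fst : Continuous (Prod.fst : W × Z → W))
    rwa [Set.image_univ, Prod.fst_surjective.range_eq] at h
  have hZc : CompactSpace Z := by
    constructor
    have h := isCompact_univ.image (continuous_snd : Continuous (Prod.snd : W × Z → Z))
    rwa [Set.image_univ, Prod.snd_surjective.range_eq] at h
  have hzc : ∀ a b : W, Continuous fun z : Z => ρ (a, z) (b, z) := by
    intro a b
    exact hρc.comp ((continuous_const.prodMk continuous_id).prodMk
      (continuous_const.prodMk continuous_id))
  have hbdd : ∀ a b : W, BddAbove (Set.range fun z : Z => ρ (a, z) (b, z)) :=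
    fun a b => (isCompact_range (hzc a b)).bddAbove
  -- continuity of the sup pseudometric at the diagonal (the key uniformity step)
  have key : ∀ w : W, Tendsto (fun w' => ⨆ z : Z, ρ (w', z) (w, z)) (𝓝 w) (𝓝 0) := by
    intro w
    rw [Metric.tendsto_nhds]
    intro ε hε
    have hG : Continuous fun p : W × Z => ρ p (w, p.2) :=
      hρc.comp (continuous_id.prodMk (continuous_const.prodMk continuous_snd))
    have hopen : IsOpen {p : W × Z | ρ p (w, p.2) < ε / 2} := isOpen_lt hG continuous_const
    have hsub : ({w} : Set W) ×ˢ (univ : Set Z) ⊆ {p : W × Z | ρ p (w, p.2) < ε / 2} := by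
      rintro ⟨w', z⟩ ⟨hw', -⟩
      simp only [mem_singleton_iff] at hw'
      subst hw'
      simp only [mem_setOf_eq, hrefl]
      positivity
    obtain ⟨u, v, hu, hv, hwu, hvz, huv⟩ :=
      generalized_tube_lemma isCompact_singleton isCompact_univ hopen hsub
    filter_upwards [hu.mem_nhds (hwu rfl)] with w' hw'
    have hball : ∀ z : Z, ρ (w', z) (w, z) ≤ ε / 2 := fun z =>
      (huv (Set.mk_mem_prod hw' (hvz (mem_univ z)))).le
    have h1 : (⨆ z : Z, ρ (w', z) (w, z)) ≤ ε / 2 := ciSup_le hball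
    have h2 : 0 ≤ ⨆ z : Z, ρ (w', z) (w, z) := Real.iSup_nonneg fun z => hnonneg _ _
    rw [Real.dist_eq, sub_zero, abs_of_nonneg h2]
    linarith
  set f : W → W → ℝ := fun a b => ⨆ z : Z, ρ (a, z) (b, z) with hf
  have ftri : ∀ a b c : W, f a c ≤ f a b + f b c := fun a b c =>
    ciSup_le fun z => (htri _ (b, z) _).trans
      (add_le_add (le_ciSup (hbdd a b) z) (le_ciSup (hbdd b c) z))
  have fsymm : ∀ a b : W, f a b = f b a := by
    intro a b
    simp only [hf]
    congr 1
    ext z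
    exact hsymm _ _
  have fcont : ∀ w : W, Continuous fun w' => f w' w := by
    intro w
    rw [continuous_iff_continuousAt]
    intro w₂
    have hb : ∀ w', |f w' w - f w₂ w| ≤ f w' w₂ := by
      intro w'
      rw [abs_sub_le_iff]
      have h1 := ftri w' w₂ w
      have h2 := ftri w₂ w' w
      have h3 := fsymm w₂ w'
      constructor <;> linarith
    have hsq := squeeze_zero_norm (f := fun w' => f w' w - f w₂ w)
      (fun w' => by rw [Real.norm_eq_abs]; exact hb w') (key w₂)
    have : Tendsto (fun w' => f w' w) (𝓝 w₂) (𝓝 (f w₂ w)) := by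
      have := hsq.add_const (f w₂ w)
      simpa using this
    exact this
  refine ⟨?_, key⟩
  intro ε hε
  have hcover : (univ : Set W) ⊆ ⋃ w : W, {w' | f w' w < ε} := by
    intro w _
    refine mem_iUnion.2 ⟨w, ?_⟩
    have : f w w = 0 := by
      simp only [hf, hrefl]
      exact ciSup_const
    simp only [mem_setOf_eq, this]
    exact hε
  obtain ⟨t, ht⟩ := isCompact_univ.elim_finite_subcover (fun w : W => {w' | f w' w < ε})
    (fun w => isOpen_lt (fcont w) continuous_const) hcover
  refine ⟨t, fun w => ?_⟩
  obtain ⟨w₀, hw₀t, hw₀⟩ := mem_iUnion₂.1 (ht (mem_univ w))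
  exact ⟨w₀, hw₀t, hw₀⟩
end

section
/- Let (T, U) be a compact topological space, (ψ_n) a sequence of nonpositive upper semicontinuous real-valued functions on T decreasing pointwise to a function γ, d a U-continuous pseudometric on T, K = γ⁻¹({0}) nonempty, and (c_n) a sequence of positive reals converging to 0. Then the Hausdorff distance (with respect to d) between the sets {t : |ψ_n(t)| ≤ c_n} and K converges to 0 as n → ∞. -/
open Filter Topology Metric Set

/-!
Since `ψ n ≤ 0` decreases to `γ`, every `ψ n` vanishes on `K`, so `K` lies in each near-zero set
and only the excess `sup {d(t, K) : |ψ n t| ≤ c n}` has to go to `0`. The distance to `K` is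
continuous, so for `ε > 0` the set `C = {t : ε ≤ d(t, K)}` is compact and `γ < 0` on it. The open
sets `{ψ n < -1/(n+1)}` increase and cover `C`, so a single one contains it: `ψ N < -δ` on `C`.
Once `n ≥ N` and `c n < δ`, the near-zero set of `ψ n` misses `C`.
-/

theorem IsCompact.exists_forall_lt_neg_of_antitone {X : Type*} [TopologicalSpace X] {C : Set X}
    (hC : IsCompact C) {f : ℕ → X → ℝ} (husc : ∀ n, UpperSemicontinuous (f n))
    (hanti : ∀ x, Antitone fun n => f n x) (hneg : ∀ x ∈ C, ∃ n, f n x < 0) :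
    ∃ N, ∃ δ > 0, ∀ x ∈ C, f N x < -δ := by
  set U : ℕ → Set X := fun n => {x | f n x < -(1 / ((n : ℝ) + 1))}
  have hU_open : ∀ n, IsOpen (U n) := fun n =>
    upperSemicontinuous_iff_isOpen_preimage.1 (husc n) _
  have hU_mono : Monotone U := by
    intro m n hmn x (hx : f m x < _)
    show f n x < _
    linarith [hanti x hmn, Nat.one_div_le_one_div (α := ℝ) hmn]
  have hC_cover : C ⊆ ⋃ n, U n := by
    intro x hx
    obtain ⟨m, hm⟩ := hneg x hx
    obtain ⟨n, hn⟩ := exists_nat_one_div_lt (neg_pos.2 hm)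
    refine mem_iUnion.2 ⟨max m n, ?_⟩
    show f (max m n) x < _
    linarith [hanti x (le_max_left m n), Nat.one_div_le_one_div (α := ℝ) (le_max_right m n)]
  obtain ⟨N, hN⟩ := hC.elim_directed_cover U hU_open hC_cover hU_mono.directed_le
  exact ⟨N, 1 / ((N : ℝ) + 1), by positivity, hN⟩

section InfDistWith

variable {α : Type*}

/-- By the `sInf ∅ = 0` convention this is `0` when no `k` satisfies `P`. -/
noncomputable def infDistWith (d : α → α → ℝ) (P : α → Prop) (t : α) : ℝ :=
  sInf {s : ℝ | ∃ k, P k ∧ s = d t k}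

noncomputable def hausdorffDistWith (d : α → α → ℝ) (P Q : α → Prop) : ℝ :=
  max (sSup {r : ℝ | ∃ t, P t ∧ r = infDistWith d Q t})
    (sSup {r : ℝ | ∃ k, Q k ∧ r = infDistWith d P k})

variable {d : α → α → ℝ} {P Q : α → Prop}

theorem infDistWith_nonneg (hd : ∀ s t, 0 ≤ d s t) (t : α) : 0 ≤ infDistWith d P t :=
  Real.sInf_nonneg (by rintro _ ⟨k, -, rfl⟩; exact hd t k)

theorem infDistWith_le (hd : ∀ s t, 0 ≤ d s t) (t : α) {k : α} (hk : P k) :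
    infDistWith d P t ≤ d t k :=
  csInf_le ⟨0, by rintro _ ⟨k, -, rfl⟩; exact hd t k⟩ ⟨k, hk, rfl⟩

theorem infDistWith_eq_zero (hd : ∀ s t, 0 ≤ d s t) (hrefl : ∀ t, d t t = 0) {k : α}
    (hk : P k) : infDistWith d P k = 0 :=
  le_antisymm ((infDistWith_le hd k hk).trans_eq (hrefl k)) (infDistWith_nonneg hd k)

theorem infDistWith_le_add (hd : ∀ s t, 0 ≤ d s t) (htri : ∀ s t u, d s u ≤ d s t + d t u)
    (a b : α) : infDistWith d P a ≤ infDistWith d P b + d a b := by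
  by_cases hP : ∃ k, P k
  · obtain ⟨k₀, hk₀⟩ := hP
    suffices infDistWith d P a - d a b ≤ infDistWith d P b by linarith
    refine le_csInf ⟨d b k₀, k₀, hk₀, rfl⟩ ?_
    rintro _ ⟨k, hk, rfl⟩
    linarith [infDistWith_le hd a hk, htri a b k]
  · have hempty : ∀ t, {s : ℝ | ∃ k, P k ∧ s = d t k} = ∅ := fun t =>
      eq_empty_iff_forall_notMem.2 fun _ ⟨k, hk, _⟩ => hP ⟨k, hk⟩
    simp only [infDistWith, hempty, Real.sInf_empty, zero_add]
    exact hd a b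

theorem abs_infDistWith_sub_le (hd : ∀ s t, 0 ≤ d s t) (hsymm : ∀ s t, d s t = d t s)
    (htri : ∀ s t u, d s u ≤ d s t + d t u) (s t : α) :
    |infDistWith d P s - infDistWith d P t| ≤ d s t := by
  rw [abs_sub_le_iff]
  constructor
  · linarith [infDistWith_le_add (P := P) hd htri s t]
  · linarith [infDistWith_le_add (P := P) hd htri t s, hsymm s t]

theorem continuous_infDistWith [TopologicalSpace α] (hd : ∀ s t, 0 ≤ d s t)
    (hsymm : ∀ s t, d s t = d t s) (htri : ∀ s t u, d s u ≤ d s t + d t u)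
    (hcont : ∀ t, Tendsto (fun s => d s t) (𝓝 t) (𝓝 0)) : Continuous (infDistWith d P) :=
  continuous_iff_continuousAt.2 fun t => tendsto_iff_dist_tendsto_zero.2 <|
    squeeze_zero (fun _ => dist_nonneg) (fun s => abs_infDistWith_sub_le hd hsymm htri s t)
      (hcont t)

theorem hausdorffDistWith_nonneg (hd : ∀ s t, 0 ≤ d s t) : 0 ≤ hausdorffDistWith d P Q :=
  le_max_of_le_left <| Real.sSup_nonneg (by rintro _ ⟨t, -, rfl⟩; exact infDistWith_nonneg hd t)

theorem hausdorffDistWith_le_of_imp (hd : ∀ s t, 0 ≤ d s t) (hrefl : ∀ t, d t t = 0)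
    (hQP : ∀ k, Q k → P k) {ε : ℝ} (hε : 0 ≤ ε) (h : ∀ t, P t → infDistWith d Q t ≤ ε) :
    hausdorffDistWith d P Q ≤ ε :=
  max_le (Real.sSup_le (by rintro _ ⟨t, ht, rfl⟩; exact h t ht) hε)
    (Real.sSup_le (by
      rintro _ ⟨k, hk, rfl⟩
      exact (infDistWith_eq_zero hd hrefl (hQP k hk)).trans_le hε) hε)

end InfDistWith

theorem hausdorff_distance_near_zero_sets_tendsto_zero_general
    {T : Type*} [TopologicalSpace T] [CompactSpace T]
    (ψ : ℕ → T → ℝ) (γ : T → ℝ) (d : T → T → ℝ) (c : ℕ → ℝ)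
    (husc : ∀ n, UpperSemicontinuous (ψ n))
    (hnonpos : ∀ n t, ψ n t ≤ 0)
    (hdec : ∀ t, Antitone fun n => ψ n t)
    (hlim : ∀ t, Tendsto (fun n => ψ n t) atTop (𝓝 (γ t)))
    (hdnonneg : ∀ s t, 0 ≤ d s t)
    (hdrefl : ∀ t, d t t = 0)
    (hdsymm : ∀ s t, d s t = d t s)
    (hdtri : ∀ s t u, d s u ≤ d s t + d t u)
    (hdcont : ∀ t : T, Tendsto (fun s => d s t) (𝓝 t) (𝓝 0))
    (hc : ∀ n, 0 < c n) (hc0 : Tendsto c atTop (𝓝 0)) :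
    Tendsto (fun n =>
        max
          (sSup {r : ℝ | ∃ t : T, |ψ n t| ≤ c n ∧
              r = sInf {s : ℝ | ∃ k : T, γ k = 0 ∧ s = d t k}})
          (sSup {r : ℝ | ∃ k : T, γ k = 0 ∧
              r = sInf {s : ℝ | ∃ t : T, |ψ n t| ≤ c n ∧ s = d k t}}))
      atTop (𝓝 0) := by
  change Tendsto (fun n => hausdorffDistWith d (fun t => |ψ n t| ≤ c n) (γ · = 0)) atTop (𝓝 0)
  have hγ_le : ∀ n t, γ t ≤ ψ n t := fun n t => (hdec t).le_of_tendsto (hlim t) n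
  have hK_near_zero : ∀ n k, γ k = 0 → |ψ n k| ≤ c n := fun n k hk => by
    rw [le_antisymm (hnonpos n k) (hk ▸ hγ_le n k), abs_zero]
    exact (hc n).le
  refine tendsto_order.2 ⟨fun a ha => .of_forall fun n =>
    ha.trans_le (hausdorffDistWith_nonneg hdnonneg), fun ε hε => ?_⟩
  set C := {t | ε / 2 ≤ infDistWith d (γ · = 0) t}
  have hC : IsCompact C :=
    (isClosed_le continuous_const (continuous_infDistWith hdnonneg hdsymm hdtri hdcont)).isCompact
  have hγ_neg : ∀ t ∈ C, γ t < 0 := fun t ht =>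
    ((hγ_le 0 t).trans (hnonpos 0 t)).lt_of_ne fun hK => by
      linarith [show ε / 2 ≤ 0 from (infDistWith_eq_zero hdnonneg hdrefl hK).subst ht]
  obtain ⟨N, δ, hδ, hN⟩ := hC.exists_forall_lt_neg_of_antitone husc hdec fun t ht =>
    ((hlim t).eventually_lt_const (hγ_neg t ht)).exists
  filter_upwards [hc0.eventually_lt_const hδ, eventually_ge_atTop N] with n hcn hnN
  refine (hausdorffDistWith_le_of_imp hdnonneg hdrefl (hK_near_zero n) (by positivity)
    fun t ht => ?_).trans_lt (half_lt_self hε)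
  by_contra! hfar
  linarith [hN t hfar.le, hdec t hnN, (abs_le.1 ht).1]

/-- Hausdorff-distance convergence of near-zero sets of a decreasing sequence of
nonpositive upper semicontinuous functions to the zero set of the limit. -/
theorem hausdorff_distance_near_zero_sets_tendsto_zero
    {T : Type*} [TopologicalSpace T] [CompactSpace T]
    (ψ : ℕ → T → ℝ) (γ : T → ℝ) (d : T → T → ℝ) (c : ℕ → ℝ)
    (husc : ∀ n, UpperSemicontinuous (ψ n))
    (hnonpos : ∀ n t, ψ n t ≤ 0)
    (hdec : ∀ t, Antitone fun n => ψ n t)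
    (hlim : ∀ t, Tendsto (fun n => ψ n t) atTop (𝓝 (γ t)))
    (hdnonneg : ∀ s t, 0 ≤ d s t)
    (hdrefl : ∀ t, d t t = 0)
    (hdsymm : ∀ s t, d s t = d t s)
    (hdtri : ∀ s t u, d s u ≤ d s t + d t u)
    (hdcont : ∀ t : T, Tendsto (fun s => d s t) (𝓝 t) (𝓝 0))
    (hK : {t : T | γ t = 0}.Nonempty)
    (hc : ∀ n, 0 < c n) (hc0 : Tendsto c atTop (𝓝 0)) :
    Tendsto (fun n =>
        max
          (sSup {r : ℝ | ∃ t : T, |ψ n t| ≤ c n ∧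
              r = sInf {s : ℝ | ∃ k : T, γ k = 0 ∧ s = d t k}})
          (sSup {r : ℝ | ∃ k : T, γ k = 0 ∧
              r = sInf {s : ℝ | ∃ t : T, |ψ n t| ≤ c n ∧ s = d k t}}))
      atTop (𝓝 0) :=
  hausdorff_distance_near_zero_sets_tendsto_zero_general ψ γ d c husc hnonpos hdec hlim hdnonneg
    hdrefl hdsymm hdtri hdcont hc hc0
end

section
/- Let Z be totally bounded with respect to a pseudometric d_Z, (W, 𝒲) a topological space on which a pseudometric d_W is continuous, K : W → Z a correspondence (set-valued map) that is lower hemicontinuous with nonempty values at every point of a compact subset S ⊆ W. Then for every δ > 0 there exists a 𝒲-open neighborhood S_δ of S such that K has nonempty values on S_δ and sup_{w ∈ S_δ} inf_{w' ∈ S} ( d_W(w, w') + sup_{z ∈ K(w')} d_Z(z, K(w)) ) < δ. -/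
open Filter Topology Metric Set

/-- For a lower hemicontinuous correspondence `K` with nonempty values on a compact
set `S`, every `δ > 0` admits an open neighborhood `S_δ` of `S` on which `K` has
nonempty values and `sup_{w ∈ S_δ} inf_{w' ∈ S} (d_W(w,w') + sup_{z ∈ K(w')} d_Z(z, K(w))) < δ`. -/
theorem lhc_neighborhood_of_compact
    {W Z : Type*} [TopologicalSpace W] [PseudoMetricSpace Z]
    (hZ : TotallyBounded (Set.univ : Set Z))
    (dW : W → W → ℝ)
    (hnonneg : ∀ w w', 0 ≤ dW w w')
    (hrefl : ∀ w, dW w w = 0)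
    (hsymm : ∀ w w', dW w w' = dW w' w)
    (htri : ∀ w w' w'', dW w w'' ≤ dW w w' + dW w' w'')
    (hdWcont : ∀ w : W, Tendsto (fun w' => dW w' w) (𝓝 w) (𝓝 0))
    (K : W → Set Z) (S : Set W) (hS : IsCompact S)
    (hne : ∀ w ∈ S, (K w).Nonempty)
    (hlhc : ∀ w ∈ S, ∀ V : Set Z, IsOpen V → (K w ∩ V).Nonempty →
      ∀ᶠ w' in 𝓝 w, (K w' ∩ V).Nonempty)
    (δ : ℝ) (hδ : 0 < δ) :
    ∃ Sδ : Set W, IsOpen Sδ ∧ S ⊆ Sδ ∧ (∀ w ∈ Sδ, (K w).Nonempty) ∧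
      ∀ w ∈ Sδ, ∃ w' ∈ S,
        dW w w' + sSup {r : ℝ | ∃ z ∈ K w', r = Metric.infDist z (K w)} < δ := by
  set ε := δ / 4 with hεdef
  have hε : 0 < ε := by positivity
  obtain ⟨t, htfin, htcov⟩ := (Metric.totallyBounded_iff.mp hZ) ε hε
  -- the good event near each point of S
  have key : ∀ w₀ ∈ S, ∀ᶠ w' in 𝓝 w₀,
      (K w').Nonempty ∧ dW w' w₀ < ε ∧
      ∀ z ∈ t, (K w₀ ∩ ball z ε).Nonempty → (K w' ∩ ball z ε).Nonempty := by
    intro w₀ hw₀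
    have h1 : ∀ᶠ w' in 𝓝 w₀, (K w').Nonempty := by
      have := hlhc w₀ hw₀ univ isOpen_univ (by simpa using hne w₀ hw₀)
      simpa using this
    have h2 : ∀ᶠ w' in 𝓝 w₀, dW w' w₀ < ε :=
      (hdWcont w₀).eventually_lt_const hε
    have h3 : ∀ᶠ w' in 𝓝 w₀,
        ∀ z ∈ t, (K w₀ ∩ ball z ε).Nonempty → (K w' ∩ ball z ε).Nonempty := by
      rw [Filter.eventually_all_finite htfin]
      intro z _
      by_cases hz : (K w₀ ∩ ball z ε).Nonempty
      · filter_upwards [hlhc w₀ hw₀ (ball z ε) isOpen_ball hz] with w' hw' _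
        exact hw'
      · filter_upwards with w' h; exact absurd h hz
    exact h1.and (h2.and h3)
  choose! U hUsub hUopen hUmem using fun w₀ (h : w₀ ∈ S) =>
    (mem_nhds_iff.mp (key w₀ h))
  refine ⟨⋃ (w₀ : W) (h : w₀ ∈ S), U w₀, ?_, ?_, ?_, ?_⟩
  · exact isOpen_biUnion fun w₀ h => hUopen w₀ h
  · intro w₀ h; exact Set.mem_biUnion h (hUmem w₀ h)
  · intro w hw
    obtain ⟨w₀, hw₀, hwU⟩ := Set.mem_iUnion₂.mp hw
    exact (hUsub w₀ hw₀ hwU).1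
  · intro w hw
    obtain ⟨w₀, hw₀, hwU⟩ := Set.mem_iUnion₂.mp hw
    obtain ⟨hKw, hdW, hmeet⟩ := hUsub w₀ hw₀ hwU
    refine ⟨w₀, hw₀, ?_⟩
    have hsup : sSup {r : ℝ | ∃ z ∈ K w₀, r = Metric.infDist z (K w)} ≤ 2 * ε := by
      apply Real.sSup_le
      · rintro r ⟨z, hz, rfl⟩
        have : z ∈ ⋃ y ∈ t, ball y ε := htcov (mem_univ z)
        obtain ⟨z₀, hz₀t, hzball⟩ := Set.mem_iUnion₂.mp this
        obtain ⟨z', hz'K, hz'ball⟩ := hmeet z₀ hz₀t ⟨z, hz, hzball⟩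
        calc Metric.infDist z (K w) ≤ dist z z' := Metric.infDist_le_dist_of_mem hz'K
          _ ≤ dist z z₀ + dist z₀ z' := dist_triangle _ _ _
          _ ≤ ε + ε := by
              have h1 : dist z z₀ < ε := mem_ball.mp hzball
              have h2 : dist z₀ z' < ε := by
                have := mem_ball.mp hz'ball
                rwa [dist_comm]
              linarith
          _ = 2 * ε := by ring
      · positivity
    have : dW w w₀ < ε := hdW
    have hεδ : ε = δ / 4 := hεdef
    linarith
end

section
/- Let B be a real normed vector space, Θ ⊆ B, θ ∈ Θ, and suppose Θ ∩ B(θ, δ₀) is convex for some δ₀ > 0. Let D : B → ℝ be positively homogeneous (D(λh) = λD(h) for λ ≥ 0). Then the function δ ↦ inf{ D(θ' − θ)/δ : θ' ∈ Θ, ‖θ' − θ‖ ≤ δ } is nondecreasing on (0, δ₀); in particular its limit as δ ↓ 0 exists (possibly −∞). -/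
open Filter Topology Metric Set

/-- For `Θ` locally convex at `θ` and `D` positively homogeneous, the function
`δ ↦ inf { D(θ'-θ)/δ : θ' ∈ Θ, ‖θ'-θ‖ ≤ δ }` is nondecreasing on `(0, δ₀)`;
in particular its limit as `δ ↓ 0` exists (in the extended reals). -/
theorem inf_quotient_monotone_of_locally_convex
    {B : Type*} [NormedAddCommGroup B] [NormedSpace ℝ B]
    (Θ : Set B) (θ : B) (hθ : θ ∈ Θ) (δ₀ : ℝ) (hδ₀ : 0 < δ₀)
    (hconv : Convex ℝ (Θ ∩ Metric.ball θ δ₀))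
    (D : B → ℝ) (hD : ∀ (h : B) (l : ℝ), 0 ≤ l → D (l • h) = l * D h) :
    (∀ δ₁ δ₂ : ℝ, 0 < δ₁ → δ₁ ≤ δ₂ → δ₂ < δ₀ →
        sInf {r : EReal | ∃ θ' ∈ Θ, ‖θ' - θ‖ ≤ δ₁ ∧ r = ((D (θ' - θ) / δ₁ : ℝ) : EReal)} ≤
          sInf {r : EReal | ∃ θ' ∈ Θ, ‖θ' - θ‖ ≤ δ₂ ∧ r = ((D (θ' - θ) / δ₂ : ℝ) : EReal)}) ∧
      ∃ L : EReal,
        Tendsto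
          (fun δ : ℝ =>
            sInf {r : EReal | ∃ θ' ∈ Θ, ‖θ' - θ‖ ≤ δ ∧ r = ((D (θ' - θ) / δ : ℝ) : EReal)})
          (𝓝[>] (0 : ℝ)) (𝓝 L) := by
  have key : ∀ δ₁ δ₂ : ℝ, 0 < δ₁ → δ₁ ≤ δ₂ → δ₂ < δ₀ →
      sInf {r : EReal | ∃ θ' ∈ Θ, ‖θ' - θ‖ ≤ δ₁ ∧ r = ((D (θ' - θ) / δ₁ : ℝ) : EReal)} ≤
        sInf {r : EReal | ∃ θ' ∈ Θ, ‖θ' - θ‖ ≤ δ₂ ∧ r = ((D (θ' - θ) / δ₂ : ℝ) : EReal)} := by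
    intro δ₁ δ₂ h1 h12 h2
    have h2pos : 0 < δ₂ := lt_of_lt_of_le h1 h12
    refine le_sInf fun r hr => ?_
    obtain ⟨θ', hθ', hnorm, rfl⟩ := hr
    set t : ℝ := δ₁ / δ₂ with ht
    have ht0 : 0 ≤ t := div_nonneg h1.le h2pos.le
    have ht1 : t ≤ 1 := div_le_one_of_le₀ h12 h2pos.le
    have hθ'ball : θ' ∈ Θ ∩ Metric.ball θ δ₀ := by
      refine ⟨hθ', ?_⟩
      rw [Metric.mem_ball, dist_eq_norm]
      exact lt_of_le_of_lt hnorm h2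
    have hθball : θ ∈ Θ ∩ Metric.ball θ δ₀ := ⟨hθ, Metric.mem_ball_self hδ₀⟩
    have hmem : (1 - t) • θ + t • θ' ∈ Θ ∩ Metric.ball θ δ₀ :=
      hconv hθball hθ'ball (by linarith) ht0 (by ring)
    set θ'' : B := (1 - t) • θ + t • θ' with hθ''
    have hdiff : θ'' - θ = t • (θ' - θ) := by
      rw [hθ'']; module
    refine sInf_le ⟨θ'', hmem.1, ?_, ?_⟩
    · rw [hdiff, norm_smul, Real.norm_eq_abs, abs_of_nonneg ht0]
      calc t * ‖θ' - θ‖ ≤ t * δ₂ := by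
              exact mul_le_mul_of_nonneg_left hnorm ht0
        _ = δ₁ := by rw [ht]; field_simp
    · rw [hdiff, hD _ t ht0]
      congr 1
      rw [ht]
      field_simp
  refine ⟨key, ?_⟩
  set f : ℝ → EReal := fun δ =>
    sInf {r : EReal | ∃ θ' ∈ Θ, ‖θ' - θ‖ ≤ δ ∧ r = ((D (θ' - θ) / δ : ℝ) : EReal)} with hf
  have hmono : MonotoneOn f (Set.Ioo (0:ℝ) δ₀) := by
    intro a ha b hb hab
    exact key a b ha.1 hab hb.2
  refine ⟨sInf (f '' Set.Ioo (0:ℝ) δ₀), ?_⟩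
  exact MonotoneOn.tendsto_nhdsWithin_Ioo_right ⟨δ₀/2, by constructor <;> linarith⟩
    hmono (OrderBot.bddBelow _)
end

section
/- Let A be a topological space and X a Banach space with closed unit ball B₁, and X* its dual with closed unit ball B₁*. Let C : A → X assign to each a a convex cone C(a) ⊆ X and let C°(a) = { y ∈ X* : y(x) ≤ 0 for all x ∈ C(a) }. If a ↦ C(a) ∩ B₁ is lower hemicontinuous with respect to the norm topology on X at a point a, then a ↦ C°(a) ∩ B₁* is upper hemicontinuous at a with respect to the weak-* topology on X*. -/
open Filter Topology Metric Set

/-!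
A weak-* closed-graph argument. The polar balls all lie in the weak-* compact dual unit ball
`B₁*`, so upper hemicontinuity at `a` follows once every `y ∈ B₁*` outside `C°(a)` has a
neighbourhood `N × W` of `(a, y)` whose points `(a', z)` satisfy `z ∉ C°(a')`. Such a `y` is
positive at some `x ∈ C(a) ∩ B₁` (rescale along the cone); lower hemicontinuity provides
`x' ∈ C(a')` close to `x` for `a'` near `a`, and every `z ∈ B₁*` with `z x > y x / 2` is then
positive at `x'`.
-/

theorem IsCompact.eventually_subset_of_eventually_notMem {A Y : Type*} [TopologicalSpace A]
    [TopologicalSpace Y] {S : A → Set Y} {K : Set Y} {a : A} (hK : IsCompact K)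
    (hSK : ∀ a', S a' ⊆ K) (hgraph : ∀ y ∈ K, y ∉ S a → ∀ᶠ p in 𝓝 (a, y), p.2 ∉ S p.1)
    {U : Set Y} (hU : IsOpen U) (hSU : S a ⊆ U) :
    ∀ᶠ a' in 𝓝 a, S a' ⊆ U := by
  have hKU : ∀ᶠ a' in 𝓝 a, ∀ y ∈ K \ U, y ∉ S a' :=
    (hK.diff hU).eventually_forall_of_forall_eventually
      fun y hy => hgraph y hy.1 fun hyS => hy.2 (hSU hyS)
  filter_upwards [hKU] with a' ha' y hy
  by_contra hyU
  exact ha' y ⟨hSK a' hy, hyU⟩ hy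

section

variable {X : Type*} [NormedAddCommGroup X] [NormedSpace ℝ X]

def polarConeBall (C : Set X) : Set (WeakDual ℝ X) :=
  {y | (∀ x ∈ C, y x ≤ 0) ∧ ‖WeakDual.toStrongDual y‖ ≤ 1}

theorem exists_mem_closedBall_pos_of_pos {F : Type*} [FunLike F X ℝ] [LinearMapClass F ℝ X ℝ]
    {C : Set X} (hcone : ∀ x ∈ C, ∀ r : ℝ, 0 ≤ r → r • x ∈ C) (f : F) {x : X} (hx : x ∈ C)
    (hfx : 0 < f x) : ∃ x' ∈ C ∩ closedBall 0 1, 0 < f x' := by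
  have hx0 : x ≠ 0 := by
    rintro rfl
    simp at hfx
  have hnorm : 0 < ‖x‖ := norm_pos_iff.mpr hx0
  refine ⟨‖x‖⁻¹ • x, ⟨hcone x hx _ (inv_nonneg.mpr hnorm.le), ?_⟩, ?_⟩
  · rw [mem_closedBall_zero_iff, norm_smul, norm_inv, norm_norm, inv_mul_cancel₀ hnorm.ne']
  · rw [map_smul, smul_eq_mul]
    exact mul_pos (inv_pos.mpr hnorm) hfx

theorem WeakDual.apply_le_norm_of_norm_le_one {z : WeakDual ℝ X}
    (hz : ‖WeakDual.toStrongDual z‖ ≤ 1) (v : X) : z v ≤ ‖v‖ :=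
  calc z v ≤ ‖WeakDual.toStrongDual z v‖ := le_abs_self _
    _ ≤ 1 * ‖v‖ := (WeakDual.toStrongDual z).le_of_opNorm_le hz v
    _ = ‖v‖ := one_mul _

theorem eventually_notMem_polarConeBall {A : Type*} [TopologicalSpace A] {C : A → Set X} {a : A}
    {x : X}
    (happrox : ∀ ε > 0, ∀ᶠ a' in 𝓝 a, ∃ x' ∈ C a', dist x' x < ε)
    {y : WeakDual ℝ X} (hyx : 0 < y x) :
    ∀ᶠ p in 𝓝 (a, y), p.2 ∉ polarConeBall (C p.1) := by
  have hW : ∀ᶠ z in 𝓝 y, y x / 2 < z x :=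
    (isOpen_lt continuous_const (WeakDual.eval_continuous x)).mem_nhds (half_lt_self hyx)
  rw [nhds_prod_eq]
  filter_upwards [(happrox _ (half_pos hyx)).prod_mk hW] with ⟨a', z⟩ ⟨⟨x', hx'C, hx'x⟩, hzx⟩
    ⟨hzC, hznorm⟩
  have hdiff : z (x - x') < y x / 2 :=
    (WeakDual.apply_le_norm_of_norm_le_one hznorm _).trans_lt (by rwa [← dist_eq_norm, dist_comm])
  have hsplit : z x = z x' + z (x - x') := by rw [← map_add, add_sub_cancel]
  linarith [hzC x' hx'C]

end

theorem polar_weakstar_uhc_of_lhc_general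
    {A X : Type*} [TopologicalSpace A]
    [NormedAddCommGroup X] [NormedSpace ℝ X]
    (C : A → Set X)
    (hcone : ∀ a, ∀ x ∈ C a, ∀ r : ℝ, 0 ≤ r → r • x ∈ C a)
    (a : A)
    (hlhc : ∀ V : Set X, IsOpen V → ((C a ∩ Metric.closedBall 0 1) ∩ V).Nonempty →
      ∀ᶠ a' in 𝓝 a, ((C a' ∩ Metric.closedBall 0 1) ∩ V).Nonempty) :
    ∀ U : Set (WeakDual ℝ X), IsOpen U →
      {y : WeakDual ℝ X | (∀ x ∈ C a, y x ≤ 0) ∧ ‖WeakDual.toStrongDual y‖ ≤ 1} ⊆ U →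
        ∀ᶠ a' in 𝓝 a,
          {y : WeakDual ℝ X | (∀ x ∈ C a', y x ≤ 0) ∧ ‖WeakDual.toStrongDual y‖ ≤ 1} ⊆ U := by
  intro U hU hSU
  have hB₁ := WeakDual.isCompact_closedBall (𝕜 := ℝ) (E := X) 0 1
  refine hB₁.eventually_subset_of_eventually_notMem
    (S := fun a' => polarConeBall (C a')) (fun a' y hy => by simpa using hy.2) ?_ hU hSU
  intro y hy hyC
  obtain ⟨x, hxC, hyx⟩ : ∃ x ∈ C a, 0 < y x := by
    simpa [polarConeBall, show ‖WeakDual.toStrongDual y‖ ≤ 1 by simpa using hy] using hyC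
  obtain ⟨x, hx, hyx⟩ := exists_mem_closedBall_pos_of_pos (hcone a) y hxC hyx
  refine eventually_notMem_polarConeBall (fun ε hε => ?_) hyx
  filter_upwards [hlhc _ isOpen_ball ⟨x, hx, mem_ball_self hε⟩] with a' ⟨x', ⟨hx'C, _⟩, hx'x⟩
  exact ⟨x', hx'C, hx'x⟩

/-- If `a ↦ C(a) ∩ B₁` is norm-topology lower hemicontinuous at `a`, then
`a ↦ C°(a) ∩ B₁*` is weak-* upper hemicontinuous at `a`. -/
theorem polar_weakstar_uhc_of_lhc
    {A X : Type*} [TopologicalSpace A]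
    [NormedAddCommGroup X] [NormedSpace ℝ X] [CompleteSpace X]
    (C : A → Set X)
    (hconv : ∀ a, Convex ℝ (C a))
    (hcone : ∀ a, ∀ x ∈ C a, ∀ r : ℝ, 0 ≤ r → r • x ∈ C a)
    (a : A)
    (hlhc : ∀ V : Set X, IsOpen V → ((C a ∩ Metric.closedBall 0 1) ∩ V).Nonempty →
      ∀ᶠ a' in 𝓝 a, ((C a' ∩ Metric.closedBall 0 1) ∩ V).Nonempty) :
    ∀ U : Set (WeakDual ℝ X), IsOpen U →
      {y : WeakDual ℝ X | (∀ x ∈ C a, y x ≤ 0) ∧ ‖WeakDual.toStrongDual y‖ ≤ 1} ⊆ U →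
        ∀ᶠ a' in 𝓝 a,
          {y : WeakDual ℝ X | (∀ x ∈ C a', y x ≤ 0) ∧ ‖WeakDual.toStrongDual y‖ ≤ 1} ⊆ U :=
  polar_weakstar_uhc_of_lhc_general C hcone a hlhc
end

section
/- Let X be a Banach space, B a normed space, Θ ⊆ B locally convex at θ with tangent cone T_θΘ, ∇m : B → X bounded linear, and t : X → ℝ a continuous affine map. Suppose that t ∈ K(θ), i.e., γ(θ,t) := liminf_{δ→0} inf_{θ'∈Θ, ‖θ'−θ‖≤δ} (t(∇m(θ'−θ)) − t(0))/δ = 0. Then for every h in the closure of T_θΘ, t(∇m(h)) − t(0) ≥ 0. Conversely, if t(∇m(h)) − t(0) ≥ 0 for all h ∈ T_θΘ, then γ(θ,t) = 0. -/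
open Filter Topology Metric Set

/-- For a continuous affine `t` (with linear part `y`), `γ(θ,t) = 0` implies
`t(∇m h) - t 0 = y(∇m h) ≥ 0` for all `h` in the closure of the tangent cone
`T_θΘ`; conversely, nonnegativity of `y ∘ ∇m` on `T_θΘ` implies `γ(θ,t) = 0`. -/
theorem tangent_cone_characterization_of_K
    {B X : Type*} [NormedAddCommGroup B] [NormedSpace ℝ B]
    [NormedAddCommGroup X] [NormedSpace ℝ X]
    (Θ : Set B) (θ : B) (hθ : θ ∈ Θ) (δ₀ : ℝ) (hδ₀ : 0 < δ₀)
    (hconv : Convex ℝ (Θ ∩ Metric.ball θ δ₀))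
    (gradm : B →L[ℝ] X)
    (t : X → ℝ) (y : X →L[ℝ] ℝ) (ht : ∀ x : X, t x = y x + t 0) :
    (Filter.liminf
        (fun δ : ℝ =>
          sInf {r : EReal | ∃ θ' ∈ Θ, ‖θ' - θ‖ ≤ δ ∧
            r = (((t (gradm (θ' - θ)) - t 0) / δ : ℝ) : EReal)})
        (𝓝[>] (0 : ℝ)) = (0 : EReal) →
      ∀ h ∈ closure {v : B | ∀ δ : ℝ, 0 < δ →
          ∃ l : ℝ, 0 < l ∧ ∃ θ' ∈ Θ, ‖θ' - θ‖ ≤ δ ∧ v = l • (θ' - θ)},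
        0 ≤ t (gradm h) - t 0) ∧
    ((∀ h ∈ {v : B | ∀ δ : ℝ, 0 < δ →
          ∃ l : ℝ, 0 < l ∧ ∃ θ' ∈ Θ, ‖θ' - θ‖ ≤ δ ∧ v = l • (θ' - θ)},
        0 ≤ t (gradm h) - t 0) →
      Filter.liminf
        (fun δ : ℝ =>
          sInf {r : EReal | ∃ θ' ∈ Θ, ‖θ' - θ‖ ≤ δ ∧
            r = (((t (gradm (θ' - θ)) - t 0) / δ : ℝ) : EReal)})
        (𝓝[>] (0 : ℝ)) = (0 : EReal)) := by
  have htsub : ∀ x : X, t x - t 0 = y x := by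
    intro x; rw [ht x]; ring
  constructor
  · -- liminf = 0 → nonneg on closure of tangent cone
    intro hlim h hh
    have hcont : Continuous fun v : B => t (gradm v) - t 0 := by
      have : (fun v : B => t (gradm v) - t 0) = fun v : B => y (gradm v) := by
        funext v; exact htsub _
      rw [this]
      exact y.continuous.comp gradm.continuous
    have hcl : IsClosed {v : B | 0 ≤ t (gradm v) - t 0} :=
      isClosed_le continuous_const hcont
    refine hcl.closure_subset_iff.mpr ?_ hh
    intro v hv
    show 0 ≤ t (gradm v) - t 0
    rw [htsub]
    -- key claim: for every ε > 0, -(ε * ‖v‖) ≤ y (gradm v)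
    have key : ∀ ε : ℝ, 0 < ε → -(ε * ‖v‖) ≤ y (gradm v) := by
      intro ε hε
      have hlt : ((-ε : ℝ) : EReal) < Filter.liminf
          (fun δ : ℝ =>
            sInf {r : EReal | ∃ θ' ∈ Θ, ‖θ' - θ‖ ≤ δ ∧
              r = (((t (gradm (θ' - θ)) - t 0) / δ : ℝ) : EReal)})
          (𝓝[>] (0 : ℝ)) := by
        rw [hlim]
        exact_mod_cast (by linarith : (-ε : ℝ) < 0)
      have hev := Filter.eventually_lt_of_lt_liminf hlt
      obtain ⟨δ₁, hδ₁, hδ₁P⟩ := (nhdsGT_basis (0 : ℝ)).eventually_iff.mp hev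
      obtain ⟨l, hl, θ', hθ', hθ'le, hveq⟩ := hv (δ₁ / 2) (by linarith)
      by_cases hzero : θ' = θ
      · subst hzero
        simp only [sub_self, smul_zero] at hveq
        subst hveq
        simp only [map_zero, norm_zero, mul_zero, neg_zero, le_refl]
      · set d : ℝ := ‖θ' - θ‖ with hd
        have hdpos : 0 < d := by
          rw [hd, norm_pos_iff]
          intro hcon
          exact hzero (by rwa [sub_eq_zero] at hcon)
        have hdmem : d ∈ Ioo (0 : ℝ) δ₁ := ⟨hdpos, by linarith⟩
        have hsinf := hδ₁P hdmem
        have hmem : (((t (gradm (θ' - θ)) - t 0) / d : ℝ) : EReal) ∈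
            {r : EReal | ∃ θ'' ∈ Θ, ‖θ'' - θ‖ ≤ d ∧
              r = (((t (gradm (θ'' - θ)) - t 0) / d : ℝ) : EReal)} :=
          ⟨θ', hθ', le_refl _, rfl⟩
        have hr : ((-ε : ℝ) : EReal) < (((t (gradm (θ' - θ)) - t 0) / d : ℝ) : EReal) :=
          lt_of_lt_of_le hsinf (sInf_le hmem)
        have hrR : (-ε : ℝ) < (t (gradm (θ' - θ)) - t 0) / d := by exact_mod_cast hr
        rw [htsub] at hrR
        have hyge : -(ε * d) ≤ y (gradm (θ' - θ)) := by
          have h3 := (lt_div_iff₀ hdpos).mp hrR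
          linarith
        have hnv : ‖v‖ = l * d := by
          rw [hveq, norm_smul, Real.norm_eq_abs, abs_of_pos hl]
        have : y (gradm v) = l * y (gradm (θ' - θ)) := by
          rw [hveq, map_smul, map_smul]
          simp
        rw [this, hnv]
        nlinarith
    by_contra hc
    push_neg at hc
    have hnv : (0 : ℝ) ≤ ‖v‖ := norm_nonneg v
    have h1 : (0:ℝ) < ‖v‖ + 1 := by linarith
    have hε : 0 < -(y (gradm v)) / (‖v‖ + 1) := div_pos (neg_pos.mpr hc) h1
    have hk := key (-(y (gradm v)) / (‖v‖ + 1)) hε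
    have hmul : (-(y (gradm v)) / (‖v‖ + 1)) * ‖v‖
        = -(y (gradm v)) - (-(y (gradm v)) / (‖v‖ + 1)) := by
      field_simp
      ring
    linarith
  · -- nonneg on tangent cone → liminf = 0
    intro hT
    have heq : ∀ᶠ δ in 𝓝[>] (0 : ℝ),
        sInf {r : EReal | ∃ θ' ∈ Θ, ‖θ' - θ‖ ≤ δ ∧
          r = (((t (gradm (θ' - θ)) - t 0) / δ : ℝ) : EReal)} = (0 : EReal) := by
      filter_upwards [Ioo_mem_nhdsGT_of_mem (Set.mem_Ico.mpr ⟨le_refl (0:ℝ), hδ₀⟩)]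
        with δ hδ
      obtain ⟨hδpos, hδlt⟩ := hδ
      apply le_antisymm
      · apply sInf_le
        refine ⟨θ, hθ, by simp [hδpos.le], ?_⟩
        have : t (gradm (θ - θ)) - t 0 = 0 := by
          rw [htsub]; simp
        rw [this]
        simp
      · apply le_sInf
        rintro r ⟨θ', hθ'Θ, hθ'le, rfl⟩
        have hnonneg : 0 ≤ t (gradm (θ' - θ)) - t 0 := by
          apply hT
          -- show θ' - θ is in the tangent cone
          intro δ' hδ'
          set s : ℝ := min 1 (δ' / (‖θ' - θ‖ + 1)) with hs
          have hnorm1 : (0:ℝ) < ‖θ' - θ‖ + 1 := by positivity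
          have hspos : 0 < s := lt_min one_pos (by positivity)
          have hsle1 : s ≤ 1 := min_le_left _ _
          have hθ'' : θ + s • (θ' - θ) ∈ Θ ∩ Metric.ball θ δ₀ := by
            have h1 : θ ∈ Θ ∩ Metric.ball θ δ₀ :=
              ⟨hθ, Metric.mem_ball_self hδ₀⟩
            have h2 : θ' ∈ Θ ∩ Metric.ball θ δ₀ := by
              refine ⟨hθ'Θ, ?_⟩
              rw [Metric.mem_ball, dist_eq_norm]
              linarith
            have hmem := hconv h1 h2 (by linarith : (0:ℝ) ≤ 1 - s) hspos.le (by ring)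
            have heqc : (1 - s) • θ + s • θ' = θ + s • (θ' - θ) := by module
            rwa [heqc] at hmem
          refine ⟨1 / s, one_div_pos.mpr hspos, θ + s • (θ' - θ), hθ''.1, ?_, ?_⟩
          · rw [add_sub_cancel_left, norm_smul, Real.norm_eq_abs, abs_of_pos hspos]
            have hsle : s ≤ δ' / (‖θ' - θ‖ + 1) := min_le_right _ _
            have : s * (‖θ' - θ‖ + 1) ≤ δ' := by
              rw [← le_div_iff₀ hnorm1]; exact hsle
            nlinarith [norm_nonneg (θ' - θ), hspos]
          · rw [add_sub_cancel_left, smul_smul, one_div, inv_mul_cancel₀ (ne_of_gt hspos),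
              one_smul]
        show (0 : EReal) ≤ _
        rw [show ((0 : EReal) = ((0:ℝ) : EReal)) from rfl, EReal.coe_le_coe_iff]
        positivity
    rw [Filter.liminf_congr heq]
    exact Filter.liminf_const 0
end
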